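/- (Theorem 1 of the paper, noiseless concrete form.) Let U and U' be two random vectors in ℝⁿ (e.g., two linear transforms of the same input), each with joint density whose marginals are continuous and strictly positive, and let Z and Z' be obtained by applying to each component the CDF of that component. Under integrability of all the entropy integrands involved, I(U) ≤ I(U') if and only if h(Z) ≥ h(Z'). Hence minimizing the multi-information of the outputs over a family of transforms is equivalent to maximizing the differential entropy of the CDF-transformed outputs. -/

import Mathlib

/-!
Since `F i' = fm i > 0`, the map `Φ = Pi.map F` is injective and differentiable with Jacobian
`∏ i, fm i (u i)`. The change of variables formula for differential entropy,
`h(Φ U) = h(U) + 𝔼 log |det DΦ(U)|`, therefore gives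
`h(Z) = h(U) + ∑ i, 𝔼 log fm i (U i) = h(U) - ∑ i, h(U i) = -I(U)`,
and the two inequalities are the same one up to sign.
-/

open MeasureTheory Set

section WithDensity

variable {α : Type*} [MeasurableSpace α] {μ : Measure α} {f : α → ℝ}

theorem integral_withDensity_ofReal (hf_meas : Measurable f) (hf : 0 ≤ f) (g : α → ℝ) :
    ∫ x, g x ∂μ.withDensity (fun x => ENNReal.ofReal (f x)) = ∫ x, f x * g x ∂μ := by
  rw [integral_withDensity_eq_integral_toReal_smul hf_meas.ennreal_ofReal
    (.of_forall fun _ => ENNReal.ofReal_lt_top)]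
  simp_rw [ENNReal.toReal_ofReal (hf _), smul_eq_mul]

theorem integrable_withDensity_ofReal_iff (hf_meas : Measurable f) (hf : 0 ≤ f) {g : α → ℝ} :
    Integrable g (μ.withDensity fun x => ENNReal.ofReal (f x)) ↔
      Integrable (fun x => f x * g x) μ := by
  rw [integrable_withDensity_iff_integrable_smul' hf_meas.ennreal_ofReal
    (.of_forall fun _ => ENNReal.ofReal_lt_top)]
  simp_rw [ENNReal.toReal_ofReal (hf _), smul_eq_mul]

theorem integrable_of_withDensity_ofReal_isFiniteMeasure (hf_meas : AEStronglyMeasurable f μ)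
    (hf : 0 ≤ f) [IsFiniteMeasure (μ.withDensity fun x => ENNReal.ofReal (f x))] :
    Integrable f μ := by
  refine ⟨hf_meas, ?_⟩
  rw [hasFiniteIntegral_iff_ofReal (.of_forall hf), ← setLIntegral_univ,
    ← withDensity_apply _ MeasurableSet.univ]
  exact measure_lt_top _ _

theorem integral_mul_comp_of_map_withDensity_ofReal {β : Type*} [MeasurableSpace β] {ν : Measure β}
    {T : α → β} (hT : Measurable T) {q : β → ℝ} (hf_meas : Measurable f) (hf : 0 ≤ f)
    (hq_meas : Measurable q) (hq : 0 ≤ q)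
    (h : (μ.withDensity fun x => ENNReal.ofReal (f x)).map T =
      ν.withDensity fun y => ENNReal.ofReal (q y))
    {φ : β → ℝ} (hφ : Measurable φ) (hqφ : Integrable (fun y => q y * φ y) ν) :
    Integrable (fun x => f x * φ (T x)) μ ∧
      ∫ x, f x * φ (T x) ∂μ = ∫ y, q y * φ y ∂ν := by
  rw [← integrable_withDensity_ofReal_iff hq_meas hq, ← h,
    integrable_map_measure hφ.aestronglyMeasurable hT.aemeasurable] at hqφ
  refine ⟨(integrable_withDensity_ofReal_iff hf_meas hf).1 hqφ, ?_⟩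
  rw [← integral_withDensity_ofReal hf_meas hf, ← integral_withDensity_ofReal hq_meas hq, ← h,
    integral_map hT.aemeasurable hφ.aestronglyMeasurable]

theorem ae_eq_zero_of_notMem_range_of_map_eq_withDensity {β : Type*} [MeasurableSpace β]
    {ν : Measure β} [SFinite ν] {T : α → β} (hT : MeasurableEmbedding T) {q : β → ENNReal}
    (hq : AEMeasurable q ν) (h : μ.map T = ν.withDensity q) :
    ∀ᵐ z ∂ν, z ∉ range T → q z = 0 := by
  have : ν.withDensity q (range T)ᶜ = 0 := by
    rw [← h, hT.map_apply, preimage_compl, preimage_range, compl_univ, measure_empty]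
  rw [withDensity_apply_eq_zero' hq] at this
  rw [ae_iff]
  convert this using 2
  ext z
  simp [and_comm]

end WithDensity

theorem mul_mul_log_eq_of_eq_mul {p w a : ℝ} (h : p = w * a) :
    w * (a * Real.log a) = p * Real.log p - p * Real.log w := by
  subst h
  rcases eq_or_ne w 0 with rfl | hw
  · simp
  rcases eq_or_ne a 0 with rfl | ha
  · simp
  rw [Real.log_mul hw ha]
  ring

theorem hasDerivAt_integral_Iic {p : ℝ → ℝ} (hp_int : Integrable p) (hp : Continuous p) (x : ℝ) :
    HasDerivAt (fun t => ∫ y in Iic t, p y) (p x) x := by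
  have h : ∀ t, ∫ y in Iic t, p y = (∫ y in Iic 0, p y) + ∫ y in (0 : ℝ)..t, p y := fun t => by
    rw [← intervalIntegral.integral_Iic_sub_Iic hp_int.integrableOn hp_int.integrableOn]
    ring
  rw [funext h]
  exact (intervalIntegral.integral_hasDerivAt_right hp_int.intervalIntegrable
    (hp.stronglyMeasurableAtFilter _ _) hp.continuousAt).const_add _

section CDF

variable {Ω : Type*} [MeasurableSpace Ω] {μ : Measure Ω} {X : Ω → ℝ} {p : ℝ → ℝ}

theorem toReal_measure_le_eq_integral_Iic (hX : Measurable X) (hp : 0 ≤ p)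
    (h : μ.map X = volume.withDensity fun x => ENNReal.ofReal (p x)) (hp_int : Integrable p)
    (t : ℝ) : (μ {ω | X ω ≤ t}).toReal = ∫ x in Iic t, p x := by
  rw [show {ω | X ω ≤ t} = X ⁻¹' Iic t from rfl, ← Measure.map_apply hX measurableSet_Iic, h,
    withDensity_apply _ measurableSet_Iic,
    ← ofReal_integral_eq_lintegral_ofReal hp_int.integrableOn (.of_forall hp),
    ENNReal.toReal_ofReal (setIntegral_nonneg measurableSet_Iic fun x _ => hp x)]

theorem hasDerivAt_toReal_measure_le [IsFiniteMeasure μ] (hX : Measurable X) (hp : Continuous p)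
    (hp_nonneg : 0 ≤ p) (h : μ.map X = volume.withDensity fun x => ENNReal.ofReal (p x)) (x : ℝ) :
    HasDerivAt (fun t => (μ {ω | X ω ≤ t}).toReal) (p x) x := by
  have : IsFiniteMeasure (volume.withDensity fun x => ENNReal.ofReal (p x)) := h ▸ inferInstance
  have hp_int : Integrable p :=
    integrable_of_withDensity_ofReal_isFiniteMeasure hp.aestronglyMeasurable hp_nonneg
  simp_rw [toReal_measure_le_eq_integral_Iic hX hp_nonneg h hp_int]
  exact hasDerivAt_integral_Iic hp_int hp x

end CDF

section PiMap

variable {ι : Type*} [Fintype ι]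

theorem det_pi_smul_proj [DecidableEq ι] (d : ι → ℝ) :
    (ContinuousLinearMap.pi fun i =>
      d i • ContinuousLinearMap.proj (R := ℝ) (φ := fun _ : ι => ℝ) i).det = ∏ i, d i := by
  have : ((ContinuousLinearMap.pi fun i =>
      d i • ContinuousLinearMap.proj (R := ℝ) (φ := fun _ : ι => ℝ) i) : (ι → ℝ) →ₗ[ℝ] ι → ℝ) =
      Matrix.toLin' (Matrix.diagonal d) := by
    ext v i
    simp [Matrix.mulVec_diagonal]
  rw [ContinuousLinearMap.det, this, LinearMap.det_toLin', Matrix.det_diagonal]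

theorem hasFDerivAt_piMap {F F' : ι → ℝ → ℝ} {x : ι → ℝ}
    (hF : ∀ i, HasDerivAt (F i) (F' i (x i)) (x i)) :
    HasFDerivAt (Pi.map F)
      (ContinuousLinearMap.pi fun i =>
        F' i (x i) • ContinuousLinearMap.proj (R := ℝ) (φ := fun _ : ι => ℝ) i) x :=
  hasFDerivAt_pi.2 fun i => (hF i).comp_hasFDerivAt x (hasFDerivAt_apply i x)

end PiMap

section ChangeOfVariables

variable {E : Type*} [NormedAddCommGroup E] [NormedSpace ℝ E] [FiniteDimensional ℝ E]
  [MeasurableSpace E] [BorelSpace E] {μ : Measure E} [μ.IsAddHaarMeasure]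
  {Φ : E → E} {Φ' : E → E →L[ℝ] E}

theorem ae_eq_abs_det_mul_of_map_withDensity (hΦ' : ∀ x, HasFDerivAt Φ (Φ' x) x)
    (hΦ : Function.Injective Φ) {p q : E → ENNReal} (hp : AEMeasurable p μ) (hq : Measurable q)
    (h : (μ.withDensity p).map Φ = μ.withDensity q) :
    p =ᵐ[μ] fun x => ENNReal.ofReal |(Φ' x).det| * q (Φ x) := by
  have hΦ_cont : Continuous Φ := continuous_iff_continuousAt.2 fun x => (hΦ' x).continuousAt
  have hΦ_emb : MeasurableEmbedding Φ := hΦ_cont.measurableEmbedding hΦ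
  have hdet : AEMeasurable (fun x => ENNReal.ofReal |(Φ' x).det|) μ := by
    simpa using aemeasurable_ofReal_abs_det_fderivWithin μ MeasurableSet.univ
      fun x _ => (hΦ' x).hasFDerivWithinAt
  refine (withDensity_eq_iff_of_sigmaFinite hp
    (hdet.mul (hq.comp hΦ_cont.measurable).aemeasurable)).1 (Measure.ext fun s hs => ?_)
  calc μ.withDensity p s = (μ.withDensity p).map Φ (Φ '' s) := by
        rw [hΦ_emb.map_apply, preimage_image_eq s hΦ]
    _ = ∫⁻ x in Φ '' s, q x ∂μ := by rw [h, withDensity_apply']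
    _ = _ := by
        rw [lintegral_image_eq_lintegral_abs_det_fderiv_mul μ hs
          (fun x _ => (hΦ' x).hasFDerivWithinAt) hΦ.injOn, withDensity_apply _ hs]
        rfl

theorem integral_mul_log_of_map_withDensity (hΦ' : ∀ x, HasFDerivAt Φ (Φ' x) x)
    (hΦ : Function.Injective Φ) {p q : E → ℝ} (hp_meas : Measurable p) (hp : 0 ≤ p)
    (hq_meas : Measurable q) (hq : 0 ≤ q)
    (h : (μ.withDensity fun x => ENNReal.ofReal (p x)).map Φ =
      μ.withDensity fun y => ENNReal.ofReal (q y))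
    (hp_int : Integrable (fun x => p x * Real.log (p x)) μ)
    (hdet_int : Integrable (fun x => p x * Real.log |(Φ' x).det|) μ) :
    ∫ y, q y * Real.log (q y) ∂μ =
      ∫ x, p x * Real.log (p x) ∂μ - ∫ x, p x * Real.log |(Φ' x).det| ∂μ := by
  have hΦ_cont : Continuous Φ := continuous_iff_continuousAt.2 fun x => (hΦ' x).continuousAt
  have hpq : ∀ᵐ x ∂μ, p x = |(Φ' x).det| * q (Φ x) := by
    filter_upwards [ae_eq_abs_det_mul_of_map_withDensity hΦ' hΦ
      hp_meas.ennreal_ofReal.aemeasurable hq_meas.ennreal_ofReal h] with x hx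
    rwa [← ENNReal.ofReal_mul (abs_nonneg _),
      ENNReal.ofReal_eq_ofReal_iff (hp x) (mul_nonneg (abs_nonneg _) (hq _))] at hx
  have hq_zero : ∀ᵐ y ∂μ, y ∉ range Φ → q y * Real.log (q y) = 0 := by
    filter_upwards [ae_eq_zero_of_notMem_range_of_map_eq_withDensity
      (hΦ_cont.measurableEmbedding hΦ) hq_meas.ennreal_ofReal.aemeasurable h] with y hy hyΦ
    rw [le_antisymm (ENNReal.ofReal_eq_zero.1 (hy hyΦ)) (hq y), zero_mul]
  calc ∫ y, q y * Real.log (q y) ∂μ = ∫ y in range Φ, q y * Real.log (q y) ∂μ :=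
        (setIntegral_eq_integral_of_ae_compl_eq_zero hq_zero).symm
    _ = ∫ x, |(Φ' x).det| * (q (Φ x) * Real.log (q (Φ x))) ∂μ := by
        rw [← image_univ, integral_image_eq_integral_abs_det_fderiv_smul μ MeasurableSet.univ
          (fun x _ => (hΦ' x).hasFDerivWithinAt) hΦ.injOn, Measure.restrict_univ]
        rfl
    _ = ∫ x, (p x * Real.log (p x) - p x * Real.log |(Φ' x).det|) ∂μ :=
        integral_congr_ae (hpq.mono fun x hx => mul_mul_log_eq_of_eq_mul hx)
    _ = _ := integral_sub hp_int hdet_int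

end ChangeOfVariables

theorem integral_mul_log_density_cdf_transform {Ω : Type*} [MeasurableSpace Ω] {μ : Measure Ω}
    [IsFiniteMeasure μ] {ι : Type*} [Fintype ι] [DecidableEq ι] {U : Ω → ι → ℝ}
    (hU : Measurable U) {f : (ι → ℝ) → ℝ} (hf_meas : Measurable f) (hf_nonneg : 0 ≤ f)
    (hf : μ.map U = volume.withDensity fun x => ENNReal.ofReal (f x))
    {fm : ι → ℝ → ℝ} (hfm_cont : ∀ i, Continuous (fm i)) (hfm_pos : ∀ i x, 0 < fm i x)
    (hfm : ∀ i, μ.map (fun ω => U ω i) = volume.withDensity fun x => ENNReal.ofReal (fm i x))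
    {F : ι → ℝ → ℝ} (hF : ∀ i t, F i t = (μ {ω | U ω i ≤ t}).toReal)
    {g : (ι → ℝ) → ℝ} (hg_meas : Measurable g) (hg_nonneg : 0 ≤ g)
    (hg : μ.map (fun ω i => F i (U ω i)) = volume.withDensity fun z => ENNReal.ofReal (g z))
    (h_int_f : Integrable fun u => f u * Real.log (f u))
    (h_int_fm : ∀ i, Integrable fun x => fm i x * Real.log (fm i x)) :
    ∫ z, g z * Real.log (g z) =
      (∫ u, f u * Real.log (f u)) - ∑ i, ∫ x, fm i x * Real.log (fm i x) := by
  have hF_deriv (i : ι) (x : ℝ) : HasDerivAt (F i) (fm i x) x := by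
    rw [funext (hF i)]
    exact hasDerivAt_toReal_measure_le (hU.eval (a := i)) (hfm_cont i)
      (fun x => (hfm_pos i x).le) (hfm i) x
  have hΦ' (u : ι → ℝ) := hasFDerivAt_piMap fun i => hF_deriv i (u i)
  have hΦ : Function.Injective (Pi.map F) := Function.Injective.piMap fun i =>
    (strictMono_of_deriv_pos fun x => (hF_deriv i x).deriv ▸ hfm_pos i x).injective
  have hmap : (volume.withDensity fun u => ENNReal.ofReal (f u)).map (Pi.map F) =
      volume.withDensity fun z => ENNReal.ofReal (g z) := by
    rw [← hf, ← hg, Measure.map_map (continuous_iff_continuousAt.2 fun u =>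
      (hΦ' u).continuousAt).measurable hU]
    rfl
  have hmarg (i : ι) : (volume.withDensity fun u => ENNReal.ofReal (f u)).map (fun u => u i) =
      volume.withDensity fun x => ENNReal.ofReal (fm i x) := by
    rw [← hf, ← hfm i, Measure.map_map (measurable_pi_apply i) hU]
    rfl
  have hcross (i : ι) := integral_mul_comp_of_map_withDensity_ofReal (measurable_pi_apply i)
    hf_meas hf_nonneg (hfm_cont i).measurable (fun x => (hfm_pos i x).le) (hmarg i)
    ((hfm_cont i).log fun x => (hfm_pos i x).ne').measurable (h_int_fm i)
  have hlog_det (u : ι → ℝ) : f u * Real.log |(ContinuousLinearMap.pi fun i =>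
      fm i (u i) • ContinuousLinearMap.proj (R := ℝ) (φ := fun _ : ι => ℝ) i).det| =
      ∑ i, f u * Real.log (fm i (u i)) := by
    rw [det_pi_smul_proj, abs_of_pos (Finset.prod_pos fun i _ => hfm_pos i (u i)),
      Real.log_prod fun i _ => (hfm_pos i (u i)).ne', Finset.mul_sum]
  rw [integral_mul_log_of_map_withDensity hΦ' hΦ hf_meas hf_nonneg hg_meas hg_nonneg hmap h_int_f
    (by simp_rw [hlog_det]; exact integrable_finsetSum _ fun i _ => (hcross i).1)]
  simp_rw [hlog_det]
  rw [integral_finsetSum _ fun i _ => (hcross i).1, Finset.sum_congr rfl fun i _ => (hcross i).2]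

theorem multiInformation_le_iff_entropy_ge_of_cdf_transform_general
    {Ω : Type*} [MeasurableSpace Ω] (μ : Measure Ω) [IsProbabilityMeasure μ]
    {n : ℕ} (U V : Ω → Fin n → ℝ) (hU : Measurable U) (hV : Measurable V)
    -- joint and marginal densities of U
    (f : (Fin n → ℝ) → ℝ) (hf_meas : Measurable f) (hf_nonneg : ∀ x, 0 ≤ f x)
    (hf : μ.map U = volume.withDensity (fun x => ENNReal.ofReal (f x)))
    (fm : Fin n → ℝ → ℝ) (hfm_cont : ∀ i, Continuous (fm i))
    (hfm_pos : ∀ i x, 0 < fm i x)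
    (hfm : ∀ i, μ.map (fun ω => U ω i) =
      volume.withDensity (fun x => ENNReal.ofReal (fm i x)))
    -- joint and marginal densities of V
    (f' : (Fin n → ℝ) → ℝ) (hf'_meas : Measurable f') (hf'_nonneg : ∀ x, 0 ≤ f' x)
    (hf' : μ.map V = volume.withDensity (fun x => ENNReal.ofReal (f' x)))
    (fm' : Fin n → ℝ → ℝ) (hfm'_cont : ∀ i, Continuous (fm' i))
    (hfm'_pos : ∀ i x, 0 < fm' i x)
    (hfm' : ∀ i, μ.map (fun ω => V ω i) =
      volume.withDensity (fun x => ENNReal.ofReal (fm' i x)))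
    -- the component-wise CDFs
    (F : Fin n → ℝ → ℝ) (hF : ∀ i t, F i t = (μ {ω | U ω i ≤ t}).toReal)
    (F' : Fin n → ℝ → ℝ) (hF' : ∀ i t, F' i t = (μ {ω | V ω i ≤ t}).toReal)
    -- joint densities of the CDF-transformed outputs Z and Z'
    (g : (Fin n → ℝ) → ℝ) (hg_meas : Measurable g) (hg_nonneg : ∀ z, 0 ≤ g z)
    (hg : μ.map (fun ω i => F i (U ω i)) =
      volume.withDensity (fun z => ENNReal.ofReal (g z)))
    (g' : (Fin n → ℝ) → ℝ) (hg'_meas : Measurable g') (hg'_nonneg : ∀ z, 0 ≤ g' z)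
    (hg' : μ.map (fun ω i => F' i (V ω i)) =
      volume.withDensity (fun z => ENNReal.ofReal (g' z)))
    -- integrability of all the entropy integrands involved
    (h_int_f : Integrable (fun u => f u * Real.log (f u)))
    (h_int_fm : ∀ i, Integrable (fun x => fm i x * Real.log (fm i x)))
    (h_int_f' : Integrable (fun u => f' u * Real.log (f' u)))
    (h_int_fm' : ∀ i, Integrable (fun x => fm' i x * Real.log (fm' i x))) :
    ((∑ i, -∫ x, fm i x * Real.log (fm i x)) - (-∫ u, f u * Real.log (f u)) ≤
        (∑ i, -∫ x, fm' i x * Real.log (fm' i x)) - (-∫ u, f' u * Real.log (f' u))) ↔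
      ((-∫ z, g' z * Real.log (g' z)) ≤ (-∫ z, g z * Real.log (g z))) := by
  rw [integral_mul_log_density_cdf_transform hU hf_meas hf_nonneg hf hfm_cont hfm_pos
      hfm hF hg_meas hg_nonneg hg h_int_f h_int_fm,
    integral_mul_log_density_cdf_transform hV hf'_meas hf'_nonneg hf' hfm'_cont
      hfm'_pos hfm' hF' hg'_meas hg'_nonneg hg' h_int_f' h_int_fm',
    Finset.sum_neg_distrib, Finset.sum_neg_distrib, neg_le_neg_iff]
  constructor <;> intro h <;> linarith

/-- **Theorem 1 of the paper, noiseless concrete form.**  Let `U` and `V` be two random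
vectors in `ℝⁿ` (e.g. two linear transforms of the same input), each with a joint
density whose marginals are continuous and strictly positive, and let `Z`, `Z'` be
obtained by applying to each component the CDF of that component.  Under integrability
of all the entropy integrands involved, `I(U) ≤ I(V)` holds if and only if
`h(Z) ≥ h(Z')`: minimizing the multi-information of the outputs is equivalent to
maximizing the differential entropy of the CDF-transformed outputs. -/
theorem multiInformation_le_iff_entropy_ge_of_cdf_transform
    {Ω : Type*} [MeasurableSpace Ω] (μ : Measure Ω) [IsProbabilityMeasure μ]
    {n : ℕ} (U V : Ω → Fin n → ℝ) (hU : Measurable U) (hV : Measurable V)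
    -- joint and marginal densities of U
    (f : (Fin n → ℝ) → ℝ) (hf_meas : Measurable f) (hf_nonneg : ∀ x, 0 ≤ f x)
    (hf : μ.map U = volume.withDensity (fun x => ENNReal.ofReal (f x)))
    (fm : Fin n → ℝ → ℝ) (hfm_cont : ∀ i, Continuous (fm i))
    (hfm_pos : ∀ i x, 0 < fm i x)
    (hfm : ∀ i, μ.map (fun ω => U ω i) =
      volume.withDensity (fun x => ENNReal.ofReal (fm i x)))
    -- joint and marginal densities of V
    (f' : (Fin n → ℝ) → ℝ) (hf'_meas : Measurable f') (hf'_nonneg : ∀ x, 0 ≤ f' x)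
    (hf' : μ.map V = volume.withDensity (fun x => ENNReal.ofReal (f' x)))
    (fm' : Fin n → ℝ → ℝ) (hfm'_cont : ∀ i, Continuous (fm' i))
    (hfm'_pos : ∀ i x, 0 < fm' i x)
    (hfm' : ∀ i, μ.map (fun ω => V ω i) =
      volume.withDensity (fun x => ENNReal.ofReal (fm' i x)))
    -- the component-wise CDFs
    (F : Fin n → ℝ → ℝ) (hF : ∀ i t, F i t = (μ {ω | U ω i ≤ t}).toReal)
    (F' : Fin n → ℝ → ℝ) (hF' : ∀ i t, F' i t = (μ {ω | V ω i ≤ t}).toReal)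
    -- joint densities of the CDF-transformed outputs Z and Z'
    (g : (Fin n → ℝ) → ℝ) (hg_meas : Measurable g) (hg_nonneg : ∀ z, 0 ≤ g z)
    (hg : μ.map (fun ω i => F i (U ω i)) =
      volume.withDensity (fun z => ENNReal.ofReal (g z)))
    (g' : (Fin n → ℝ) → ℝ) (hg'_meas : Measurable g') (hg'_nonneg : ∀ z, 0 ≤ g' z)
    (hg' : μ.map (fun ω i => F' i (V ω i)) =
      volume.withDensity (fun z => ENNReal.ofReal (g' z)))
    -- integrability of all the entropy integrands involved
    (h_int_f : Integrable (fun u => f u * Real.log (f u)))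
    (h_int_fm : ∀ i, Integrable (fun x => fm i x * Real.log (fm i x)))
    (h_int_f' : Integrable (fun u => f' u * Real.log (f' u)))
    (h_int_fm' : ∀ i, Integrable (fun x => fm' i x * Real.log (fm' i x)))
    (h_int_g : Integrable (fun z => g z * Real.log (g z)))
    (h_int_g' : Integrable (fun z => g' z * Real.log (g' z))) :
    ((∑ i, -∫ x, fm i x * Real.log (fm i x)) - (-∫ u, f u * Real.log (f u)) ≤
        (∑ i, -∫ x, fm' i x * Real.log (fm' i x)) - (-∫ u, f' u * Real.log (f' u))) ↔
      ((-∫ z, g' z * Real.log (g' z)) ≤ (-∫ z, g z * Real.log (g z))) :=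
  multiInformation_le_iff_entropy_ge_of_cdf_transform_general μ U V hU hV f hf_meas hf_nonneg hf fm
    hfm_cont hfm_pos hfm f' hf'_meas hf'_nonneg hf' fm' hfm'_cont hfm'_pos hfm' F hF F' hF' g
    hg_meas hg_nonneg hg g' hg'_meas hg'_nonneg hg' h_int_f h_int_fm h_int_f' h_int_fm'
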